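/- arXiv:2006.01136 — 6 statements merged into one kernel-verified Lean document; each statement's English description precedes it below -/
import Mathlib

section
/- Let d ≥ 2 and let k, j, ℓ ∈ ℤ^d \ {0} (with |·| the Euclidean norm). If |k| - |j| + |ℓ| ≠ 0, then 1/||k| - |j| + |ℓ|| ≤ 27 |j|² |ℓ|. -/
open scoped BigOperators

/-- Euclidean norm of a vector in `ℤ^d`. -/
noncomputable def zEnorm {d : ℕ} (k : Fin d → ℤ) : ℝ :=
  Real.sqrt (∑ i, ((k i : ℝ)) ^ 2)

/-!
Put `a = |k|`, `b = |j|`, `c = |ℓ|` and `x = a - b + c`. All three norms are at least `1`, so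
only `|x| < 1` needs an argument. Then no factor of
`(a+b+c)(a+b-c) x (a-b-c) = (a²+b²-c²)² - 4a²b²` vanishes (`a + b = c` or `a = b + c` would
force `x = 2a` or `x = 2c`), so this integer has absolute value at least `1`, while
the factors other than `x` are bounded by `3b`, `3b` and `3c`.
-/

lemma zEnorm_sq {d : ℕ} (k : Fin d → ℤ) : zEnorm k ^ 2 = ((∑ i, k i ^ 2 : ℤ) : ℝ) := by
  rw [zEnorm, Real.sq_sqrt (by positivity)]
  push_cast
  rfl

lemma one_le_zEnorm {d : ℕ} {k : Fin d → ℤ} (hk : k ≠ 0) : 1 ≤ zEnorm k := by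
  obtain ⟨i, hi⟩ := Function.ne_iff.mp hk
  have hki : (1 : ℝ) ≤ (k i : ℝ) ^ 2 := by
    rw [one_le_sq_iff_one_le_abs, ← Int.cast_abs]
    exact_mod_cast Int.one_le_abs hi
  refine Real.one_le_sqrt.mpr (hki.trans ?_)
  exact Finset.single_le_sum (fun i _ => sq_nonneg (k i : ℝ)) (Finset.mem_univ i)

lemma mul_four_signs_eq (a b c : ℝ) :
    (a + b + c) * (a + b - c) * (a - b + c) * (a - b - c) =
      (a ^ 2 + b ^ 2 - c ^ 2) ^ 2 - 4 * a ^ 2 * b ^ 2 := by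
  ring

lemma mul_four_signs_ne_zero {a b c : ℝ} (ha : 1 ≤ a) (hc : 1 ≤ c) (hx : |a - b + c| < 1)
    (h : a - b + c ≠ 0) : (a + b + c) * (a + b - c) * (a - b + c) * (a - b - c) ≠ 0 := by
  obtain ⟨hx₁, hx₂⟩ := abs_lt.mp hx
  refine mul_ne_zero (mul_ne_zero (mul_ne_zero ?_ ?_) h) ?_ <;> intro h0 <;> linarith

lemma abs_mul_four_signs_le {a b c : ℝ} (ha : 0 ≤ a) (hb : 1 ≤ b) (hc : 1 ≤ c)
    (hx : |a - b + c| < 1) :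
    |(a + b + c) * (a + b - c) * (a - b + c) * (a - b - c)| ≤ 27 * b ^ 2 * c * |a - b + c| := by
  obtain ⟨hx₁, hx₂⟩ := abs_lt.mp hx
  have h₁ : |a + b + c| ≤ 3 * b := abs_le.mpr ⟨by linarith, by linarith⟩
  have h₂ : |a + b - c| ≤ 3 * b := abs_le.mpr ⟨by linarith, by linarith⟩
  have h₃ : |a - b - c| ≤ 3 * c := abs_le.mpr ⟨by linarith, by linarith⟩
  calc |(a + b + c) * (a + b - c) * (a - b + c) * (a - b - c)|
      = |a + b + c| * |a + b - c| * |a - b + c| * |a - b - c| := by simp only [abs_mul]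
    _ ≤ 3 * b * (3 * b) * |a - b + c| * (3 * c) := by gcongr
    _ = 27 * b ^ 2 * c * |a - b + c| := by ring

lemma one_div_abs_sub_add_le {a b c : ℝ} (K J L : ℤ)
    (hK : a ^ 2 = K) (hJ : b ^ 2 = J) (hL : c ^ 2 = L)
    (ha : 1 ≤ a) (hb : 1 ≤ b) (hc : 1 ≤ c) (h : a - b + c ≠ 0) :
    1 / |a - b + c| ≤ 27 * b ^ 2 * c := by
  have hpos : 0 < |a - b + c| := abs_pos.mpr h
  rcases le_or_gt 1 |a - b + c| with hx | hx
  · calc 1 / |a - b + c| ≤ 1 := (div_le_one hpos).mpr hx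
      _ ≤ 27 * b ^ 2 * c := by nlinarith
  · obtain ⟨P, hP⟩ : ∃ P : ℤ, (a + b + c) * (a + b - c) * (a - b + c) * (a - b - c) = P :=
      ⟨(K + J - L) ^ 2 - 4 * K * J, by rw [mul_four_signs_eq, hK, hJ, hL]; push_cast; ring⟩
    have hP0 : P ≠ 0 := by exact_mod_cast hP ▸ mul_four_signs_ne_zero ha hc hx h
    have hP1 : (1 : ℝ) ≤ |(P : ℝ)| := by
      rw [← Int.cast_abs]
      exact_mod_cast Int.one_le_abs hP0
    rw [div_le_iff₀ hpos]
    calc 1 ≤ |(P : ℝ)| := hP1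
      _ ≤ 27 * b ^ 2 * c * |a - b + c| := hP ▸ abs_mul_four_signs_le (by linarith) hb hc hx

theorem stmt0_general {d : ℕ} (k j l : Fin d → ℤ)
    (hk : k ≠ 0) (hj : j ≠ 0) (hl : l ≠ 0)
    (h : zEnorm k - zEnorm j + zEnorm l ≠ 0) :
    1 / |zEnorm k - zEnorm j + zEnorm l| ≤ 27 * (zEnorm j) ^ 2 * zEnorm l :=
  one_div_abs_sub_add_le _ _ _ (zEnorm_sq k) (zEnorm_sq j) (zEnorm_sq l)
    (one_le_zEnorm hk) (one_le_zEnorm hj) (one_le_zEnorm hl) h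

theorem stmt0 {d : ℕ} (hd : 2 ≤ d) (k j l : Fin d → ℤ)
    (hk : k ≠ 0) (hj : j ≠ 0) (hl : l ≠ 0)
    (h : zEnorm k - zEnorm j + zEnorm l ≠ 0) :
    1 / |zEnorm k - zEnorm j + zEnorm l| ≤ 27 * (zEnorm j) ^ 2 * zEnorm l :=
  stmt0_general k j l hk hj hl h
end

section
/- For every natural number n ≥ 1, if each of n, n+1, and 4n+2 is a sum of two squares of integers, then each of 2n²+2n, 2n²+2n+1, and 4(2n²+2n)+2 is also a sum of two squares. Consequently, there are infinitely many n ∈ ℕ such that n, n+1 and 4n+2 are all sums of two squares (e.g. starting from n = 4, since 4 = 2²+0², 5 = 2²+1², 18 = 3²+3²). -/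
/-!
Since `2n² + 2n = 2 · n · (n + 1)`, Brahmagupta's identity makes it a sum of two squares as soon as
`n` and `n + 1` are, while `2n² + 2n + 1 = n² + (n + 1)²` and `4(2n² + 2n) + 2 = 2(2n + 1)²` always
are. Hence `n ↦ 2n² + 2n` maps the set of admissible `n` into itself and strictly increases every
positive `n`, so its orbit of `4` is an infinite family of admissible numbers.
-/

/-- A natural number is a sum of two squares of integers. -/
def IsSumTwoSq (n : ℕ) : Prop := ∃ x y : ℤ, (n : ℤ) = x ^ 2 + y ^ 2

theorem Set.infinite_of_mapsTo_of_lt {α : Type*} [Preorder α] {s : Set α} {f : α → α} {a : α}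
    (ha : a ∈ s) (hf : MapsTo f s s) (hlt : ∀ x ∈ s, x < f x) : s.Infinite := by
  have hmem : ∀ k, f^[k] a ∈ s := fun k => hf.iterate k ha
  have hmono : StrictMono fun k => f^[k] a := strictMono_nat_of_lt_succ fun k => by
    simpa only [Function.iterate_succ_apply'] using hlt _ (hmem k)
  exact Set.infinite_of_injective_forall_mem hmono.injective hmem

namespace IsSumTwoSq

theorem mul {m n : ℕ} (hm : IsSumTwoSq m) (hn : IsSumTwoSq n) : IsSumTwoSq (m * n) := by
  obtain ⟨x, y, hxy⟩ := hm
  obtain ⟨z, w, hzw⟩ := hn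
  exact ⟨x * z + y * w, x * w - y * z, by push_cast; rw [hxy, hzw]; ring⟩

theorem two : IsSumTwoSq 2 := ⟨1, 1, by norm_num⟩

theorem two_mul_sq_add_two_mul {n : ℕ} (hn : IsSumTwoSq n) (hn' : IsSumTwoSq (n + 1)) :
    IsSumTwoSq (2 * n ^ 2 + 2 * n) := by
  convert two.mul (hn.mul hn') using 1
  ring

theorem two_mul_sq_add_two_mul_add_one (n : ℕ) : IsSumTwoSq (2 * n ^ 2 + 2 * n + 1) :=
  ⟨n, n + 1, by push_cast; ring⟩

theorem four_mul_two_mul_sq_add_two_mul_add_two (n : ℕ) :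
    IsSumTwoSq (4 * (2 * n ^ 2 + 2 * n) + 2) :=
  ⟨2 * n + 1, 2 * n + 1, by push_cast; ring⟩

end IsSumTwoSq

open IsSumTwoSq in
theorem stmt3 :
    (∀ n : ℕ, 1 ≤ n →
      IsSumTwoSq n → IsSumTwoSq (n + 1) → IsSumTwoSq (4 * n + 2) →
      IsSumTwoSq (2 * n ^ 2 + 2 * n) ∧ IsSumTwoSq (2 * n ^ 2 + 2 * n + 1) ∧
        IsSumTwoSq (4 * (2 * n ^ 2 + 2 * n) + 2)) ∧
    {n : ℕ | IsSumTwoSq n ∧ IsSumTwoSq (n + 1) ∧ IsSumTwoSq (4 * n + 2)}.Infinite := by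
  have step : ∀ n : ℕ, IsSumTwoSq n → IsSumTwoSq (n + 1) →
      IsSumTwoSq (2 * n ^ 2 + 2 * n) ∧ IsSumTwoSq (2 * n ^ 2 + 2 * n + 1) ∧
        IsSumTwoSq (4 * (2 * n ^ 2 + 2 * n) + 2) := fun n hn hn' =>
    ⟨two_mul_sq_add_two_mul hn hn', two_mul_sq_add_two_mul_add_one n,
      four_mul_two_mul_sq_add_two_mul_add_two n⟩
  refine ⟨fun n _ hn hn' _ => step n hn hn', ?_⟩
  refine Set.Infinite.mono (Set.sep_subset _ fun n => 1 ≤ n) <|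
    Set.infinite_of_mapsTo_of_lt (f := fun n => 2 * n ^ 2 + 2 * n) (a := 4) ?_ ?_ ?_
  · exact ⟨⟨⟨2, 0, by norm_num⟩, ⟨2, 1, by norm_num⟩, ⟨3, 3, by norm_num⟩⟩, by norm_num⟩
  · rintro n ⟨⟨hn, hn', -⟩, hpos⟩
    exact ⟨step n hn hn', by nlinarith⟩
  · rintro n ⟨-, hpos⟩
    nlinarith
end

section
/- For d ≥ 2, there are infinitely many n such that (n, n+1, 4n+2) = (|k|², |j|², |ℓ|²) (Euclidean norms) for suitable k, j, ℓ ∈ ℤ^d \ {0}; for such triples the integer (|k|²+|j|²-|ℓ|²)² - 4|k|²|j|² equals 1 in absolute value. -/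
open scoped BigOperators

lemma enorm_sq {d : ℕ} (k : Fin d → ℤ) :
    (zEnorm k) ^ 2 = ((∑ i, (k i) ^ 2 : ℤ) : ℝ) := by
  rw [zEnorm, Real.sq_sqrt (by positivity)]
  push_cast
  rfl

lemma sum_sq_vec {d : ℕ} (hd : 2 ≤ d) (a b : ℤ) :
    ∑ i : Fin d, ((if (i : ℕ) = 0 then a else if (i : ℕ) = 1 then b else 0)) ^ 2
      = a ^ 2 + b ^ 2 := by
  have h0 : (0 : ℕ) < d := by omega
  have h1 : (1 : ℕ) < d := by omega
  have key : ∀ i : Fin d,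
      ((if (i : ℕ) = 0 then a else if (i : ℕ) = 1 then b else 0)) ^ 2
        = (if i = ⟨0, h0⟩ then a ^ 2 else 0) + (if i = ⟨1, h1⟩ then b ^ 2 else 0) := by
    intro i
    rcases eq_or_ne (i : ℕ) 0 with h | h
    · have : i = ⟨0, h0⟩ := by ext; simpa using h
      simp [this]
    · rcases eq_or_ne (i : ℕ) 1 with h' | h'
      · have hi : i = ⟨1, h1⟩ := by ext; simpa using h'
        have e0 : i ≠ ⟨0, h0⟩ := by simp [Fin.ext_iff]; omega
        simp [hi, e0]
      · have e0 : i ≠ ⟨0, h0⟩ := by simp [Fin.ext_iff]; omega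
        have e1 : i ≠ ⟨1, h1⟩ := by simp [Fin.ext_iff]; omega
        simp [h, h', e0, e1]
  simp only [key, Finset.sum_add_distrib, Finset.sum_ite_eq', Finset.mem_univ, if_true]

lemma exists_vec {d : ℕ} (hd : 2 ≤ d) (a b : ℤ) (m : ℕ) (hm : a ^ 2 + b ^ 2 = (m : ℤ))
    (hpos : 0 < m) :
    ∃ k : Fin d → ℤ, k ≠ 0 ∧ (zEnorm k) ^ 2 = (m : ℝ) := by
  have h0 : (0 : ℕ) < d := by omega
  have h1 : (1 : ℕ) < d := by omega
  refine ⟨fun i => if (i : ℕ) = 0 then a else if (i : ℕ) = 1 then b else 0, ?_, ?_⟩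
  · intro h
    have ha : a = 0 := by have := congrFun h ⟨0, h0⟩; simpa using this
    have hb : b = 0 := by have := congrFun h ⟨1, h1⟩; simpa using this
    rw [ha, hb] at hm
    simp at hm
    omega
  · rw [enorm_sq, sum_sq_vec hd, hm]
    norm_num

def TwoSq (m : ℤ) : Prop := ∃ a b : ℤ, a ^ 2 + b ^ 2 = m

lemma TwoSq.mul {m n : ℤ} (hm : TwoSq m) (hn : TwoSq n) : TwoSq (m * n) := by
  obtain ⟨a, b, rfl⟩ := hm
  obtain ⟨c, e, rfl⟩ := hn
  exact ⟨a * c - b * e, a * e + b * c, by ring⟩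

def Good (n : ℕ) : Prop :=
  TwoSq (n : ℤ) ∧ TwoSq ((n : ℤ) + 1) ∧ TwoSq (4 * (n : ℤ) + 2)

lemma good_four : Good 4 :=
  ⟨⟨2, 0, by norm_num⟩, ⟨2, 1, by norm_num⟩, ⟨3, 3, by norm_num⟩⟩

lemma good_step {n : ℕ} (h : Good n) : Good (2 * n ^ 2 + 2 * n) := by
  obtain ⟨h1, h2, _⟩ := h
  have h2' : TwoSq (2 : ℤ) := ⟨1, 1, by norm_num⟩
  refine ⟨?_, ⟨(n : ℤ), (n : ℤ) + 1, by push_cast; ring⟩,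
    ⟨2 * (n : ℤ) + 1, 2 * (n : ℤ) + 1, by push_cast; ring⟩⟩
  have := (h2'.mul h1).mul h2
  convert this using 1
  push_cast; ring

theorem stmt4 {d : ℕ} (hd : 2 ≤ d) :
    {n : ℕ | ∃ k j l : Fin d → ℤ, k ≠ 0 ∧ j ≠ 0 ∧ l ≠ 0 ∧
      (zEnorm k) ^ 2 = (n : ℝ) ∧ (zEnorm j) ^ 2 = (n : ℝ) + 1 ∧
      (zEnorm l) ^ 2 = 4 * (n : ℝ) + 2}.Infinite ∧
    ∀ (n : ℕ) (k j l : Fin d → ℤ),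
      (zEnorm k) ^ 2 = (n : ℝ) → (zEnorm j) ^ 2 = (n : ℝ) + 1 →
      (zEnorm l) ^ 2 = 4 * (n : ℝ) + 2 →
      |((zEnorm k) ^ 2 + (zEnorm j) ^ 2 - (zEnorm l) ^ 2) ^ 2
        - 4 * (zEnorm k) ^ 2 * (zEnorm j) ^ 2| = 1 := by
  constructor
  · -- membership from Good and positivity
    have mem : ∀ n : ℕ, Good n → 0 < n →
        n ∈ {n : ℕ | ∃ k j l : Fin d → ℤ, k ≠ 0 ∧ j ≠ 0 ∧ l ≠ 0 ∧
          (zEnorm k) ^ 2 = (n : ℝ) ∧ (zEnorm j) ^ 2 = (n : ℝ) + 1 ∧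
          (zEnorm l) ^ 2 = 4 * (n : ℝ) + 2} := by
      intro n ⟨⟨a, b, hab⟩, ⟨c, e, hce⟩, ⟨f, g, hfg⟩⟩ hpos
      obtain ⟨k, hk0, hk⟩ := exists_vec hd a b n hab hpos
      obtain ⟨j, hj0, hj⟩ := exists_vec hd c e (n + 1) (by push_cast; omega) (by omega)
      obtain ⟨l, hl0, hl⟩ := exists_vec hd f g (4 * n + 2) (by push_cast; omega) (by omega)
      refine ⟨k, j, l, hk0, hj0, hl0, hk, ?_, ?_⟩
      · rw [hj]; push_cast; ring
      · rw [hl]; push_cast; ring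
    set f : ℕ → ℕ := fun x => 2 * x ^ 2 + 2 * x with hf
    set g : ℕ → ℕ := fun m => f^[m] 4 with hg
    have hgood : ∀ m, Good (g m) ∧ 4 ≤ g m := by
      intro m
      induction m with
      | zero => exact ⟨good_four, le_refl 4⟩
      | succ m ih =>
        have : g (m + 1) = f (g m) := Function.iterate_succ_apply' f m 4
        rw [this]
        refine ⟨good_step ih.1, ?_⟩
        have := ih.2
        simp only [hf]
        nlinarith
    have hmono : StrictMono g := by
      apply strictMono_nat_of_lt_succ
      intro m
      have h4 := (hgood m).2
      have : g (m + 1) = f (g m) := Function.iterate_succ_apply' f m 4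
      rw [this]
      simp only [hf]
      nlinarith
    apply Set.infinite_of_injective_forall_mem (f := g) hmono.injective
    intro m
    exact mem (g m) (hgood m).1 (by have := (hgood m).2; omega)
  · intro n k j l hk hj hl
    rw [hk, hj, hl]
    have : ((n : ℝ) + ((n : ℝ) + 1) - (4 * (n : ℝ) + 2)) ^ 2
        - 4 * (n : ℝ) * ((n : ℝ) + 1) = 1 := by ring
    rw [this, abs_one]
end

section
/- Define, for zero-mean functions u, v, h on 𝕋^d, the operator A₁₂[u,v]h := Σ_{j,k ≠ 0, |j|≠|k|} u_j v_{-j} (|j|²/(8(|j|-|k|))) h_k e^{ik·x}, and let m₀ = 1 if d = 1 and m₀ = 3/2 if d ≥ 2. Then for all real s ≥ 0, ‖A₁₂[u,v]h‖_s ≤ (3/8) ‖u‖_{m₀} ‖v‖_{m₀} ‖h‖_s. -/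
open scoped BigOperators

/-- Euclidean norm of a vector in `ℤ^d`. -/
noncomputable def enorm' {d : ℕ} (k : Fin d → ℤ) : ℝ :=
  Real.sqrt (∑ i, ((k i : ℝ)) ^ 2)

/-- Sobolev norm `‖u‖_s`. -/
noncomputable def snorm {d : ℕ} (s : ℝ) (u : (Fin d → ℤ) →₀ ℂ) : ℝ :=
  Real.sqrt (∑ j ∈ u.support, ‖u j‖ ^ 2 * enorm' j ^ (2 * s))

/-- The operator `A₁₂[u,v]h`, given on Fourier coefficients by
`(A₁₂[u,v]h)_k = (Σ_{j : |j|≠|k|} u_j v_{-j} |j|²/(8(|j|-|k|))) h_k`. -/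
noncomputable def A12 {d : ℕ} (u v h : (Fin d → ℤ) →₀ ℂ) : (Fin d → ℤ) →₀ ℂ :=
  Finsupp.onFinset h.support
    (fun k => (∑ j ∈ u.support,
        if enorm' j ≠ enorm' k then
          u j * v (-j) * (((enorm' j ^ 2 / (8 * (enorm' j - enorm' k))) : ℝ) : ℂ)
        else 0) * h k)
    (fun k hk => Finsupp.mem_support_iff.2 fun h0 => hk (by simp [h0]))

/-- `m₀ = 1` if `d = 1`, `m₀ = 3/2` if `d ≥ 2`. -/
noncomputable def m0 (d : ℕ) : ℝ := if d = 1 then 1 else 3 / 2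

/-!
`A₁₂[u,v]` is a Fourier multiplier, so it suffices to bound its symbol at each `k ≠ 0` by
`(3/8) ‖u‖_{m₀} ‖v‖_{m₀}`. Termwise, `|j|² / (8 ||j| - |k||) ≤ (3/8) |j|^{2 m₀}`: in dimension one
`|j| - |k|` is a nonzero integer; in general either `||j| - |k|| ≥ 1`, or `|k| < |j| + 1 ≤ 2|j|`
and the integrality of `|j|² - |k|²` gives `1 / ||j| - |k|| ≤ |j| + |k| ≤ 3|j|`.
Cauchy–Schwarz in `j` then finishes the proof.
-/

section Lattice

variable {d : ℕ}

lemma enorm'_nonneg (j : Fin d → ℤ) : 0 ≤ enorm' j := Real.sqrt_nonneg _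

lemma enorm'_sq (j : Fin d → ℤ) : enorm' j ^ 2 = ((∑ i, j i ^ 2 : ℤ) : ℝ) := by
  rw [enorm', Real.sq_sqrt (by positivity)]
  push_cast
  rfl

lemma enorm'_neg (j : Fin d → ℤ) : enorm' (-j) = enorm' j := by
  simp [enorm']

lemma one_le_enorm' {j : Fin d → ℤ} (hj : j ≠ 0) : 1 ≤ enorm' j := by
  obtain ⟨i, hi⟩ := Function.ne_iff.mp hj
  have hsum : (1 : ℤ) ≤ ∑ i, j i ^ 2 :=
    calc (1 : ℤ) ≤ j i ^ 2 := by nlinarith [sq_abs (j i), Int.one_le_abs hi]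
      _ ≤ ∑ i, j i ^ 2 := Finset.single_le_sum (fun i _ => sq_nonneg (j i)) (Finset.mem_univ i)
  have : (1 : ℝ) ≤ enorm' j ^ 2 := by rw [enorm'_sq]; exact_mod_cast hsum
  nlinarith [enorm'_nonneg j]

lemma one_le_abs_enorm'_sub_mul_add {j k : Fin d → ℤ} (hj : j ≠ 0)
    (hne : enorm' j ≠ enorm' k) : 1 ≤ |enorm' j - enorm' k| * (enorm' j + enorm' k) := by
  have hpos : 0 < enorm' j + enorm' k := by linarith [one_le_enorm' hj, enorm'_nonneg k]
  have hint : ((∑ i, j i ^ 2 - ∑ i, k i ^ 2 : ℤ) : ℝ) = enorm' j ^ 2 - enorm' k ^ 2 := by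
    push_cast [enorm'_sq]
    ring
  have hint_ne : ∑ i, j i ^ 2 - ∑ i, k i ^ 2 ≠ 0 := by
    intro h0
    rw [h0, Int.cast_zero, eq_comm, sub_eq_zero] at hint
    exact hne ((pow_left_inj₀ (enorm'_nonneg j) (enorm'_nonneg k) two_ne_zero).mp hint)
  calc (1 : ℝ) ≤ |((∑ i, j i ^ 2 - ∑ i, k i ^ 2 : ℤ) : ℝ)| := by
        rw [← Int.cast_abs]; exact_mod_cast Int.one_le_abs hint_ne
    _ = |enorm' j - enorm' k| * (enorm' j + enorm' k) := by
        rw [hint, show enorm' j ^ 2 - enorm' k ^ 2 = (enorm' j - enorm' k) * (enorm' j + enorm' k)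
          by ring, abs_mul, abs_of_pos hpos]

lemma enorm'_of_fin_one (j : Fin 1 → ℤ) : enorm' j = ((|j 0| : ℤ) : ℝ) := by
  rw [enorm', Fin.sum_univ_one, Real.sqrt_sq_eq_abs]
  push_cast
  rfl

lemma one_le_abs_enorm'_sub_of_fin_one {j k : Fin 1 → ℤ} (hne : enorm' j ≠ enorm' k) :
    1 ≤ |enorm' j - enorm' k| := by
  rw [enorm'_of_fin_one, enorm'_of_fin_one] at hne ⊢
  have : |j 0| - |k 0| ≠ 0 := sub_ne_zero.mpr fun h0 => hne (by rw [h0])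
  rw [← Int.cast_sub, ← Int.cast_abs]
  exact_mod_cast Int.one_le_abs this

lemma enorm'_rpow_sq (j : Fin d → ℤ) (m : ℝ) : (enorm' j ^ m) ^ 2 = enorm' j ^ (2 * m) := by
  rw [← Real.rpow_natCast, ← Real.rpow_mul (enorm'_nonneg j), mul_comm]
  norm_num

end Lattice

lemma sq_div_abs_sub_le_three_mul_cube {a b : ℝ} (ha : 1 ≤ a) (hb : 0 ≤ b)
    (hgap : 1 ≤ |a - b| * (a + b)) : a ^ 2 / |a - b| ≤ 3 * a ^ 3 := by
  have hpos : 0 < |a - b| := by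
    by_contra! h0
    nlinarith [abs_nonneg (a - b)]
  rw [div_le_iff₀ hpos]
  rcases le_or_gt 1 |a - b| with hfar | hnear
  · nlinarith [mul_le_mul_of_nonneg_left hfar (by positivity : (0 : ℝ) ≤ 3 * a ^ 3)]
  · have hb3 : a + b ≤ 3 * a := by linarith [le_abs_self (b - a), abs_sub_comm a b]
    nlinarith [mul_le_mul_of_nonneg_left hgap (sq_nonneg a),
      mul_le_mul_of_nonneg_left hb3 (mul_nonneg (sq_nonneg a) hpos.le)]

lemma enorm'_sq_div_le {d : ℕ} {j k : Fin d → ℤ} (hj : j ≠ 0) (hk : k ≠ 0)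
    (hne : enorm' j ≠ enorm' k) :
    enorm' j ^ 2 / |enorm' j - enorm' k| ≤ 3 * enorm' j ^ (2 * m0 d) := by
  have hj1 := one_le_enorm' hj
  rcases eq_or_ne d 1 with rfl | hd
  · rw [show 2 * m0 1 = ((2 : ℕ) : ℝ) by norm_num [m0], Real.rpow_natCast]
    calc enorm' j ^ 2 / |enorm' j - enorm' k| ≤ enorm' j ^ 2 :=
          div_le_self (sq_nonneg _) (one_le_abs_enorm'_sub_of_fin_one hne)
      _ ≤ 3 * enorm' j ^ 2 := by nlinarith
  · rw [show 2 * m0 d = ((3 : ℕ) : ℝ) by norm_num [m0, hd], Real.rpow_natCast]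
    exact sq_div_abs_sub_le_three_mul_cube hj1 (enorm'_nonneg k)
      (one_le_abs_enorm'_sub_mul_add hj hne)

section Sobolev

variable {d : ℕ}

lemma sum_le_sum_support (m : ℝ) (u : (Fin d → ℤ) →₀ ℂ) (s : Finset (Fin d → ℤ)) :
    ∑ j ∈ s, ‖u j‖ ^ 2 * enorm' j ^ (2 * m) ≤ ∑ j ∈ u.support, ‖u j‖ ^ 2 * enorm' j ^ (2 * m) :=
  calc ∑ j ∈ s, ‖u j‖ ^ 2 * enorm' j ^ (2 * m)
      = ∑ j ∈ s ∩ u.support, ‖u j‖ ^ 2 * enorm' j ^ (2 * m) :=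
        (Finset.sum_subset Finset.inter_subset_left fun j _ hj => by
          simp [Finsupp.notMem_support_iff.mp fun h => hj (Finset.mem_inter.mpr ⟨‹_›, h⟩)]).symm
    _ ≤ ∑ j ∈ u.support, ‖u j‖ ^ 2 * enorm' j ^ (2 * m) :=
        Finset.sum_le_sum_of_subset_of_nonneg Finset.inter_subset_right fun j _ _ => by
          have := enorm'_nonneg j; positivity

lemma sqrt_sum_le_snorm (m : ℝ) (u : (Fin d → ℤ) →₀ ℂ) (s : Finset (Fin d → ℤ)) :
    √(∑ j ∈ s, ‖u j‖ ^ 2 * enorm' j ^ (2 * m)) ≤ snorm m u :=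
  Real.sqrt_le_sqrt (sum_le_sum_support m u s)

lemma sum_mul_le_snorm_mul_snorm (m : ℝ) (u v : (Fin d → ℤ) →₀ ℂ) (s : Finset (Fin d → ℤ)) :
    ∑ j ∈ s, (‖u j‖ * enorm' j ^ m) * (‖v (-j)‖ * enorm' j ^ m) ≤ snorm m u * snorm m v := by
  have hv : ∑ j ∈ s, (‖v (-j)‖ * enorm' j ^ m) ^ 2
      = ∑ j ∈ s.map (Equiv.neg _).toEmbedding, ‖v j‖ ^ 2 * enorm' j ^ (2 * m) := by
    simp [Finset.sum_map, mul_pow, enorm'_rpow_sq, enorm'_neg]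
  have hu : ∑ j ∈ s, (‖u j‖ * enorm' j ^ m) ^ 2 = ∑ j ∈ s, ‖u j‖ ^ 2 * enorm' j ^ (2 * m) := by
    simp only [mul_pow, enorm'_rpow_sq]
  refine (Real.sum_mul_le_sqrt_mul_sqrt _ _ _).trans ?_
  rw [hu, hv]
  exact mul_le_mul (sqrt_sum_le_snorm m u s) (sqrt_sum_le_snorm m v _) (Real.sqrt_nonneg _)
    (Real.sqrt_nonneg _)

lemma snorm_le_of_norm_le_mul {s C : ℝ} {w h : (Fin d → ℤ) →₀ ℂ} (hC : 0 ≤ C)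
    (hw : ∀ k, ‖w k‖ ≤ C * ‖h k‖) : snorm s w ≤ C * snorm s h :=
  calc snorm s w ≤ √(∑ k ∈ w.support, (C * ‖h k‖) ^ 2 * enorm' k ^ (2 * s)) :=
        Real.sqrt_le_sqrt <| Finset.sum_le_sum fun k _ => by
          have := enorm'_nonneg k
          gcongr
          exact hw k
    _ = C * √(∑ k ∈ w.support, ‖h k‖ ^ 2 * enorm' k ^ (2 * s)) := by
        simp only [mul_pow, mul_assoc, ← Finset.mul_sum]
        rw [Real.sqrt_mul (sq_nonneg C), Real.sqrt_sq hC]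
    _ ≤ C * snorm s h := mul_le_mul_of_nonneg_left (sqrt_sum_le_snorm s h _) hC

end Sobolev

noncomputable def A12Symbol {d : ℕ} (u v : (Fin d → ℤ) →₀ ℂ) (k : Fin d → ℤ) : ℂ :=
  ∑ j ∈ u.support, if enorm' j ≠ enorm' k then
    u j * v (-j) * (((enorm' j ^ 2 / (8 * (enorm' j - enorm' k))) : ℝ) : ℂ) else 0

lemma A12_apply {d : ℕ} (u v h : (Fin d → ℤ) →₀ ℂ) (k : Fin d → ℤ) :
    A12 u v h k = A12Symbol u v k * h k := rfl

lemma norm_A12Symbol_term_le {d : ℕ} (u v : (Fin d → ℤ) →₀ ℂ) {j k : Fin d → ℤ}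
    (hj : j ≠ 0) (hk : k ≠ 0) :
    ‖if enorm' j ≠ enorm' k then
        u j * v (-j) * (((enorm' j ^ 2 / (8 * (enorm' j - enorm' k))) : ℝ) : ℂ) else 0‖
      ≤ 3 / 8 * ((‖u j‖ * enorm' j ^ m0 d) * (‖v (-j)‖ * enorm' j ^ m0 d)) := by
  have hweight : 0 ≤ ‖u j‖ * ‖v (-j)‖ := by positivity
  split_ifs with hne
  · have hsymbol : ‖((enorm' j ^ 2 / (8 * (enorm' j - enorm' k)) : ℝ) : ℂ)‖
        ≤ 3 / 8 * (enorm' j ^ m0 d) ^ 2 := by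
      rw [Complex.norm_real, Real.norm_eq_abs, abs_div, abs_mul, abs_of_pos (by norm_num : (0 : ℝ) < 8),
        abs_of_nonneg (sq_nonneg _), enorm'_rpow_sq, div_mul_eq_div_div_swap, div_le_iff₀ (by norm_num : (0 : ℝ) < 8)]
      linarith [enorm'_sq_div_le hj hk hne]
    rw [norm_mul, norm_mul]
    calc ‖u j‖ * ‖v (-j)‖ * ‖((enorm' j ^ 2 / (8 * (enorm' j - enorm' k)) : ℝ) : ℂ)‖
        ≤ ‖u j‖ * ‖v (-j)‖ * (3 / 8 * (enorm' j ^ m0 d) ^ 2) :=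
          mul_le_mul_of_nonneg_left hsymbol hweight
      _ = _ := by ring
  · have := enorm'_nonneg j
    rw [norm_zero]
    positivity

lemma norm_A12Symbol_le {d : ℕ} {u : (Fin d → ℤ) →₀ ℂ} (v : (Fin d → ℤ) →₀ ℂ) (hu : u 0 = 0)
    {k : Fin d → ℤ} (hk : k ≠ 0) :
    ‖A12Symbol u v k‖ ≤ 3 / 8 * snorm (m0 d) u * snorm (m0 d) v :=
  calc ‖A12Symbol u v k‖
      ≤ ∑ j ∈ u.support, 3 / 8 * ((‖u j‖ * enorm' j ^ m0 d) * (‖v (-j)‖ * enorm' j ^ m0 d)) :=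
        (norm_sum_le _ _).trans <| Finset.sum_le_sum fun j hj =>
          norm_A12Symbol_term_le u v (by rintro rfl; exact Finsupp.mem_support_iff.mp hj hu) hk
    _ ≤ 3 / 8 * snorm (m0 d) u * snorm (m0 d) v := by
        rw [← Finset.mul_sum, mul_assoc]
        gcongr
        exact sum_mul_le_snorm_mul_snorm _ u v _

theorem stmt10_general {d : ℕ} (u v h : (Fin d → ℤ) →₀ ℂ)
    (hu : u 0 = 0) (hh : h 0 = 0) :
    ∀ s : ℝ, 0 ≤ s →
      snorm s (A12 u v h) ≤ (3 / 8) * snorm (m0 d) u * snorm (m0 d) v * snorm s h := by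
  intro s _
  have hC : 0 ≤ 3 / 8 * snorm (m0 d) u * snorm (m0 d) v := by
    unfold snorm
    positivity
  refine snorm_le_of_norm_le_mul hC fun k => ?_
  rw [A12_apply, norm_mul]
  rcases eq_or_ne k 0 with rfl | hk
  · simp [hh]
  · exact mul_le_mul_of_nonneg_right (norm_A12Symbol_le v hu hk) (norm_nonneg _)

theorem stmt10 {d : ℕ} (hd : 1 ≤ d) (u v h : (Fin d → ℤ) →₀ ℂ)
    (hu : u 0 = 0) (hv : v 0 = 0) (hh : h 0 = 0) :
    ∀ s : ℝ, 0 ≤ s →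
      snorm s (A12 u v h) ≤ (3 / 8) * snorm (m0 d) u * snorm (m0 d) v * snorm s h :=
  stmt10_general u v h hu hh
end

section
/- Let X₃⁺ be the vector field with components (X₃⁺)₁(w,z) = -(i/4) Σ_{j,k≠0, |k|=|j|} w_j w_{-j} |j|² z_k e^{ik·x} and (X₃⁺)₂(w,z) = (i/4) Σ_{j,k≠0, |k|=|j|} z_j z_{-j} |j|² w_k e^{ik·x}. Then for every s ≥ 0 and every pair (w,z) of zero-mean functions, ⟨Λ^s (X₃⁺)₁(w,z), Λ^s z⟩ + ⟨Λ^s w, Λ^s (X₃⁺)₂(w,z)⟩ = 0, where ⟨f,g⟩ = Σ_j f_j g_{-j}. -/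
open scoped BigOperators

/-- Euclidean norm of a vector in `ℤ^d`. -/
noncomputable def enormZ {d : ℕ} (k : Fin d → ℤ) : ℝ :=
  Real.sqrt (∑ i, ((k i : ℝ)) ^ 2)

/-- The bilinear pairing `⟨f,g⟩ = Σ_j f_j g_{-j}`. -/
noncomputable def pairing {d : ℕ} (f g : (Fin d → ℤ) →₀ ℂ) : ℂ :=
  ∑ j ∈ f.support, f j * g (-j)

/-- The Fourier multiplier `Λ^s : h_k ↦ |k|^s h_k`. -/
noncomputable def lam {d : ℕ} (s : ℝ) (h : (Fin d → ℤ) →₀ ℂ) : (Fin d → ℤ) →₀ ℂ :=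
  Finsupp.onFinset h.support
    (fun k => (((enormZ k ^ s) : ℝ) : ℂ) * h k)
    (fun k hk => Finsupp.mem_support_iff.2 fun h0 => hk (by simp [h0]))

/-- First component of `X₃⁺`:
`(X₃⁺)₁(w,z)_k = -(i/4) (Σ_{j : |j|=|k|} w_j w_{-j} |j|²) z_k`. -/
noncomputable def X3p1 {d : ℕ} (w z : (Fin d → ℤ) →₀ ℂ) : (Fin d → ℤ) →₀ ℂ :=
  Finsupp.onFinset z.support
    (fun k => (-(Complex.I) / 4) *
      (∑ j ∈ w.support,
        if enormZ j = enormZ k then w j * w (-j) * (((enormZ j ^ 2) : ℝ) : ℂ) else 0) * z k)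
    (fun k hk => Finsupp.mem_support_iff.2 fun h0 => hk (by simp [h0]))

/-- Second component of `X₃⁺`:
`(X₃⁺)₂(w,z)_k = (i/4) (Σ_{j : |j|=|k|} z_j z_{-j} |j|²) w_k`. -/
noncomputable def X3p2 {d : ℕ} (w z : (Fin d → ℤ) →₀ ℂ) : (Fin d → ℤ) →₀ ℂ :=
  Finsupp.onFinset w.support
    (fun k => (Complex.I / 4) *
      (∑ j ∈ z.support,
        if enormZ j = enormZ k then z j * z (-j) * (((enormZ j ^ 2) : ℝ) : ℂ) else 0) * w k)
    (fun k hk => Finsupp.mem_support_iff.2 fun h0 => hk (by simp [h0]))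

/-!
Since `Λ^s` and the coefficient of `(X₃⁺)₁`, `(X₃⁺)₂` depend on `k` only through `|k|`, both
pairings equal `∓(i/4) Σ_{|j| = |k|} |k|^{2s} |j|² w_j w_{-j} z_k z_{-k}`: the double sum is the
same after exchanging the roles of `j` and `k`, since `|j| = |k|` on its support. So they cancel.
-/

open Finset

lemma enormZ_neg {d : ℕ} (k : Fin d → ℤ) : enormZ (-k) = enormZ k := by
  simp [enormZ]

lemma pairing_eq_sum_of_support_subset {d : ℕ} {f : (Fin d → ℤ) →₀ ℂ} {T : Finset (Fin d → ℤ)}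
    (g : (Fin d → ℤ) →₀ ℂ) (h : f.support ⊆ T) : pairing f g = ∑ j ∈ T, f j * g (-j) :=
  sum_subset h fun j _ hj => by simp [Finsupp.notMem_support_iff.mp hj]

lemma lam_apply {d : ℕ} (s : ℝ) (f : (Fin d → ℤ) →₀ ℂ) (k : Fin d → ℤ) :
    lam s f k = ((enormZ k ^ s : ℝ) : ℂ) * f k :=
  rfl

lemma support_lam_subset {d : ℕ} (s : ℝ) (f : (Fin d → ℤ) →₀ ℂ) :
    (lam s f).support ⊆ f.support :=
  Finsupp.support_onFinset_subset

lemma pairing_lam_lam_of_support_subset {d : ℕ} (s : ℝ) {f : (Fin d → ℤ) →₀ ℂ}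
    {T : Finset (Fin d → ℤ)} (g : (Fin d → ℤ) →₀ ℂ) (h : f.support ⊆ T) :
    pairing (lam s f) (lam s g) = ∑ j ∈ T, ((enormZ j ^ s : ℝ) : ℂ) ^ 2 * (f j * g (-j)) := by
  rw [pairing_eq_sum_of_support_subset _ ((support_lam_subset s f).trans h)]
  refine sum_congr rfl fun j _ => ?_
  rw [lam_apply, lam_apply, enormZ_neg]
  ring

noncomputable def shellSum {d : ℕ} (w : (Fin d → ℤ) →₀ ℂ) (r : ℝ) : ℂ :=
  ∑ j ∈ w.support, if enormZ j = r then w j * w (-j) * ((enormZ j ^ 2 : ℝ) : ℂ) else 0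

lemma X3p1_apply {d : ℕ} (w z : (Fin d → ℤ) →₀ ℂ) (k : Fin d → ℤ) :
    X3p1 w z k = -Complex.I / 4 * shellSum w (enormZ k) * z k :=
  rfl

lemma X3p2_apply {d : ℕ} (w z : (Fin d → ℤ) →₀ ℂ) (k : Fin d → ℤ) :
    X3p2 w z k = Complex.I / 4 * shellSum z (enormZ k) * w k :=
  rfl

lemma support_X3p1_subset {d : ℕ} (w z : (Fin d → ℤ) →₀ ℂ) : (X3p1 w z).support ⊆ z.support :=
  Finsupp.support_onFinset_subset

lemma sum_mul_shellSum_comm {d : ℕ} (g : ℝ → ℂ) (w z : (Fin d → ℤ) →₀ ℂ) :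
    ∑ k ∈ z.support, g (enormZ k) * shellSum w (enormZ k) * (z k * z (-k)) =
      ∑ j ∈ w.support, g (enormZ j) * shellSum z (enormZ j) * (w j * w (-j)) := by
  simp only [shellSum, mul_sum, sum_mul]
  rw [sum_comm]
  refine sum_congr rfl fun j _ => sum_congr rfl fun k _ => ?_
  by_cases h : enormZ j = enormZ k
  · rw [if_pos h, if_pos h.symm, h]
    ring
  · rw [if_neg h, if_neg (Ne.symm h)]
    simp

lemma pairing_lam_X3p1_lam {d : ℕ} (s : ℝ) (w z : (Fin d → ℤ) →₀ ℂ) :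
    pairing (lam s (X3p1 w z)) (lam s z) = -Complex.I / 4 *
      ∑ k ∈ z.support, ((enormZ k ^ s : ℝ) : ℂ) ^ 2 * shellSum w (enormZ k) * (z k * z (-k)) := by
  rw [pairing_lam_lam_of_support_subset s z (support_X3p1_subset w z), mul_sum]
  refine sum_congr rfl fun k _ => ?_
  rw [X3p1_apply]
  ring

lemma pairing_lam_lam_X3p2 {d : ℕ} (s : ℝ) (w z : (Fin d → ℤ) →₀ ℂ) :
    pairing (lam s w) (lam s (X3p2 w z)) = Complex.I / 4 *
      ∑ j ∈ w.support, ((enormZ j ^ s : ℝ) : ℂ) ^ 2 * shellSum z (enormZ j) * (w j * w (-j)) := by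
  rw [pairing_lam_lam_of_support_subset s _ subset_rfl, mul_sum]
  refine sum_congr rfl fun j _ => ?_
  rw [X3p2_apply, enormZ_neg]
  ring

theorem stmt14_general {d : ℕ} (w z : (Fin d → ℤ) →₀ ℂ) :
    ∀ s : ℝ, 0 ≤ s →
      pairing (lam s (X3p1 w z)) (lam s z) + pairing (lam s w) (lam s (X3p2 w z)) = 0 := by
  intro s _
  rw [pairing_lam_X3p1_lam, pairing_lam_lam_X3p2,
    sum_mul_shellSum_comm (fun r => ((r ^ s : ℝ) : ℂ) ^ 2) w z]
  ring

theorem stmt14 {d : ℕ} (w z : (Fin d → ℤ) →₀ ℂ) (hw : w 0 = 0) (hz : z 0 = 0) :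
    ∀ s : ℝ, 0 ≤ s →
      pairing (lam s (X3p1 w z)) (lam s z) + pairing (lam s w) (lam s (X3p2 w z)) = 0 :=
  stmt14_general w z
end

section
/- Let K be a linear operator on a Banach space satisfying, for two norms ‖·‖_s and ‖·‖_{m} (with ‖·‖_m ≤ ‖·‖_s-type compatibility): ‖Kα‖_s ≤ ε(a‖α‖_s + b‖α‖_m) for parameters with ε(a+b) ≤ 1/2. Then I + K is invertible with (I+K)^{-1} = I - K + Σ_{n≥2}(-K)^n and ‖(I+K)^{-1}α‖_s ≤ C(‖α‖_s + ε b ‖α‖_m) for a universal constant C. In the concrete setting: if ‖K(w,z)(α,β)‖_s ≤ (7/16)‖w‖_{m₀}²‖α‖_s + (7/8)‖w‖_{m₀}‖w‖_s‖α‖_{m₀} for all s ≥ 0, and ‖w‖_{m₀} < 1/2, then I + K(w,z) is invertible on H^{m₀}₀ and ‖(I+K(w,z))^{-1}(α,β)‖_s ≤ C(‖α‖_s + ‖w‖_{m₀}‖w‖_s‖α‖_{m₀}). -/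
/-!
At `s = m₀` the hypothesis gives `‖K‖ ≤ (7/16 + 7/8) (W m₀)² ≤ 21/64`, so `I + K` is inverted
by the Neumann series `L`, and `‖L α‖ ≤ (64/43) ‖α‖`. For general `s` write `L α = α - K (L α)`:
since `(7/16) (W m₀)² ≤ 7/64`, the term `N s (L α)` in the bound for `N s (K (L α))` is absorbed
into the left-hand side, and the remaining term involves only `‖L α‖`. This gives `C = 2`.
-/

theorem ContinuousLinearMap.exists_inverse_one_add_of_norm_lt_one {𝕜 V : Type*}
    [NontriviallyNormedField 𝕜] [NormedAddCommGroup V] [NormedSpace 𝕜 V] [CompleteSpace V]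
    {K : V →L[𝕜] V} (hK : ‖K‖ < 1) :
    ∃ L : V →L[𝕜] V, (∀ α, L (α + K α) = α) ∧ ∀ α, L α + K (L α) = α := by
  obtain ⟨u, hu⟩ := isUnit_one_sub_of_norm_lt_one (x := -K) (by rwa [norm_neg])
  rw [sub_neg_eq_add] at hu
  refine ⟨↑u⁻¹, fun α => ?_, fun α => ?_⟩
  · simpa [hu] using congr($(u.inv_mul) α)
  · simpa [hu] using congr($(u.mul_inv) α)

theorem Seminorm.one_sub_mul_le_of_add_eq {𝕜 V : Type*} [SeminormedRing 𝕜] [AddCommGroup V]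
    [Module 𝕜 V] (p : Seminorm 𝕜 V) {α β γ : V} {c d : ℝ} (hsum : β + γ = α)
    (hγ : p γ ≤ c * p β + d) : (1 - c) * p β ≤ p α + d := by
  have hβ : p β ≤ p α + p γ := by
    simpa [← hsum] using map_sub_le_add p (β + γ) γ
  linarith

/-- Neumann-series inversion of `I + K` with tame two-norm estimates, as in
Lemma 4.2 of [Kold]: there is a universal constant `C` such that, for any space `V`
(complete in the base norm `N m₀ = ‖·‖`), any family of seminorms `N s`, any
"profile" `W` (playing the role of `s ↦ ‖w‖_s`), and any operator `K` with
`N s (K α) ≤ (7/16)‖w‖_{m₀}² N s α + (7/8)‖w‖_{m₀}‖w‖_s N m₀ α` and `‖w‖_{m₀} < 1/2`,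
the operator `I + K` is invertible and
`N s ((I+K)⁻¹ α) ≤ C (N s α + ‖w‖_{m₀}‖w‖_s N m₀ α)`. -/
theorem stmt17 :
    ∃ C : ℝ, 0 < C ∧
    ∀ (V : Type) [NormedAddCommGroup V] [NormedSpace ℂ V] [CompleteSpace V],
    ∀ (N : ℝ → V → ℝ) (W : ℝ → ℝ) (m₀ : ℝ) (K : V →L[ℂ] V),
      0 ≤ m₀ →
      (∀ s α, 0 ≤ N s α) →
      (∀ s, 0 ≤ W s) →
      (∀ α, N m₀ α = ‖α‖) →
      (∀ s α β, N s (α + β) ≤ N s α + N s β) →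
      (∀ s (c : ℂ) α, N s (c • α) = ‖c‖ * N s α) →
      (∀ s, LowerSemicontinuous (N s)) →
      (∀ s, 0 ≤ s → ∀ α,
        N s (K α) ≤ 7 / 16 * (W m₀) ^ 2 * N s α + 7 / 8 * W m₀ * W s * N m₀ α) →
      W m₀ < 1 / 2 →
      ∃ L : V →L[ℂ] V,
        (∀ α, L (α + K α) = α) ∧ (∀ α, L α + K (L α) = α) ∧
        ∀ s, 0 ≤ s → ∀ α, N s (L α) ≤ C * (N s α + W m₀ * W s * N m₀ α) := by
  refine ⟨2, two_pos, ?_⟩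
  intro V _ _ _ N W m₀ K hm₀ hN hW hNm hNadd hNsmul _ hK hsmall
  have hW₀ : W m₀ ^ 2 ≤ 1 / 4 := by nlinarith [hW m₀]
  have hKm (β : V) : ‖K β‖ ≤ 21 / 64 * ‖β‖ := by
    have := hK m₀ hm₀ β
    rw [hNm, hNm] at this
    nlinarith [norm_nonneg β]
  obtain ⟨L, hLK, hKL⟩ := ContinuousLinearMap.exists_inverse_one_add_of_norm_lt_one
    ((K.opNorm_le_bound (by norm_num) hKm).trans_lt (by norm_num))
  have hLm (α : V) : (1 - 21 / 64) * ‖L α‖ ≤ ‖α‖ + 0 :=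
    (normSeminorm ℂ V).one_sub_mul_le_of_add_eq (hKL α) (by simpa using hKm (L α))
  refine ⟨L, hLK, hKL, fun s hs α => ?_⟩
  have hKs : N s (K (L α)) ≤ 7 / 64 * N s (L α) + 7 / 8 * W m₀ * W s * ‖L α‖ := by
    have := hK s hs (L α)
    rw [hNm] at this
    nlinarith [hN s (L α)]
  have hLs : (1 - 7 / 64) * N s (L α) ≤ N s α + 7 / 8 * W m₀ * W s * ‖L α‖ :=
    (Seminorm.of (N s) (hNadd s) (hNsmul s)).one_sub_mul_le_of_add_eq (hKL α) hKs
  have hWLα : W m₀ * W s * ‖L α‖ ≤ W m₀ * W s * (64 / 43 * ‖α‖) :=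
    mul_le_mul_of_nonneg_left (by linarith [hLm α]) (mul_nonneg (hW m₀) (hW s))
  rw [hNm]
  linarith [hN s α, mul_nonneg (mul_nonneg (hW m₀) (hW s)) (norm_nonneg α)]
end
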